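/- Let M_0, M_1, M_2 be the implicit-scheme matrices defined in the context and M̃_2 := (1/β)M_2. If β > 0 and 0 < α_i < 1/(2‖M̃_2‖_2) for every i ∈ {1,…,s}, then the triple {M_0, M_1, M_2} satisfies Condition-M. -/

import Mathlib

open Matrix Filter Topology

noncomputable section

/-- Spectral norm (largest singular value) of a real matrix. -/
def specNorm {p q : Type*} [Fintype p] [Fintype q] [DecidableEq q]
    (M : Matrix p q ℝ) : ℝ :=
  ‖LinearMap.toContinuousLinearMap (Matrix.toEuclideanLin M)‖

/-- The positive semidefinite square root of a positive semidefinite matrix (as in the older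
Mathlib, where it was removed since). -/
def Matrix.PosSemidef.sqrt {n : Type*} [Fintype n] [DecidableEq n] {A : Matrix n n ℝ}
    (hA : A.PosSemidef) : Matrix n n ℝ :=
  hA.1.eigenvectorUnitary.1 * diagonal ((↑) ∘ (√·) ∘ hA.1.eigenvalues) *
    (star hA.1.eigenvectorUnitary : Matrix n n ℝ)

/-- Condition-M for a triple of matrices: `M0 = M1 + M2`, `H := M0 + M2` is symmetric
positive definite, and `‖H^{-1/2} M2 H^{-1/2}‖₂ < 1/2` (here `H^{-1/2}` is the positive
semidefinite square root of `H⁻¹`). -/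
def ConditionM {d : Type*} [Fintype d] [DecidableEq d] (M0 M1 M2 : Matrix d d ℝ) : Prop :=
  M0 = M1 + M2 ∧ ∃ hH : (M0 + M2).PosDef,
    specNorm (hH.inv.posSemidef.sqrt * M2 * hH.inv.posSemidef.sqrt) < 1 / 2

/-- The cost functional defining the proximity operator `prox_{φ,H}` at input `x`. -/
def proxCost {ι : Type*} [Fintype ι] (φ : (ι → ℝ) → EReal) (H : Matrix ι ι ℝ)
    (x u : ι → ℝ) : EReal :=
  ((((1 : ℝ) / 2) * ((u - x) ⬝ᵥ H.mulVec (u - x)) : ℝ) : EReal) + φ u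

/-- `p = prox_{φ,H}(x)`: `p` is the unique minimizer of the prox cost. -/
def IsProx {ι : Type*} [Fintype ι] (φ : (ι → ℝ) → EReal) (H : Matrix ι ι ℝ)
    (x p : ι → ℝ) : Prop :=
  (∀ u, proxCost φ H x p ≤ proxCost φ H x u) ∧
  ∀ q, (∀ u, proxCost φ H x q ≤ proxCost φ H x u) → q = p

/-- Proper lower semicontinuous convex extended-real-valued function. -/
def ProperConvexLsc {ι : Type*} [Fintype ι] (f : (ι → ℝ) → EReal) : Prop :=
  (∃ x, f x ≠ ⊤) ∧ (∀ x, f x ≠ ⊥) ∧ LowerSemicontinuous f ∧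
  ∀ x y : ι → ℝ, ∀ t : ℝ, 0 < t → t < 1 →
    f (t • x + (1 - t) • y) ≤ (t : EReal) * f x + ((1 - t : ℝ) : EReal) * f y

/-- Scaling of an extended-real-valued function by a real constant. -/
def smulF {V : Type*} (c : ℝ) (φ : V → EReal) : V → EReal := fun u => (c : EReal) * φ u

/-- The conjugate of the indicator of `C = {b}`: `ι_C*(y) = ⟨y, b⟩`. -/
def iotaCstar {m : ℕ} (b : Fin m → ℝ) : (Fin m → ℝ) → EReal :=
  fun y => ((y ⬝ᵥ b : ℝ) : EReal)

variable {s m : ℕ} {n : Fin s → ℕ}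

/-- Index type for the concatenated variable `x = (x_1, …, x_s)`. -/
abbrev XIdx (n : Fin s → ℕ) := (i : Fin s) × Fin (n i)

/-- Index type for the full variable `v = (x, y)`. -/
abbrev FIdx (n : Fin s → ℕ) (m : ℕ) := XIdx n ⊕ Fin m

/-- The `i`-th block of a concatenated vector. -/
def blk (x : XIdx n → ℝ) (i : Fin s) : Fin (n i) → ℝ := fun j => x ⟨i, j⟩

/-- The matrix `A = [A_1 … A_s]`. -/
def bigA (A : ∀ i : Fin s, Matrix (Fin m) (Fin (n i)) ℝ) : Matrix (Fin m) (XIdx n) ℝ :=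
  Matrix.of fun r p => A p.1 r p.2

/-- The separable objective `∑ f_i(x_i)`. -/
def objSum (f : ∀ i : Fin s, (Fin (n i) → ℝ) → EReal) (x : XIdx n → ℝ) : EReal :=
  ∑ i, f i (blk x i)

/-- `∑ A_i x_i`. -/
def sumAx (A : ∀ i : Fin s, Matrix (Fin m) (Fin (n i)) ℝ) (x : XIdx n → ℝ) : Fin m → ℝ :=
  ∑ i, (A i).mulVec (blk x i)

/-- `x` is a solution of problem (P). -/
def IsSolution (f : ∀ i : Fin s, (Fin (n i) → ℝ) → EReal)
    (A : ∀ i : Fin s, Matrix (Fin m) (Fin (n i)) ℝ) (b : Fin m → ℝ)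
    (x : XIdx n → ℝ) : Prop :=
  sumAx A x = b ∧ ∀ z : XIdx n → ℝ, sumAx A z = b → objSum f x ≤ objSum f z

/-- `b ∈ A(ri(dom(∑ f_i)))` where `ri` is the relative (intrinsic) interior. -/
def RiCond (f : ∀ i : Fin s, (Fin (n i) → ℝ) → EReal)
    (A : ∀ i : Fin s, Matrix (Fin m) (Fin (n i)) ℝ) (b : Fin m → ℝ) : Prop :=
  b ∈ (fun x => sumAx A x) '' intrinsicInterior ℝ {x : XIdx n → ℝ | objSum f x ≠ ⊤}

/-- The `x`-part of a full vector. -/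
def xpart (v : FIdx n m → ℝ) : XIdx n → ℝ := fun p => v (Sum.inl p)

/-- The `y`-part of a full vector. -/
def ypart (v : FIdx n m → ℝ) : Fin m → ℝ := fun r => v (Sum.inr r)

/-- The function `Φ(x_1,…,x_s,y) = ∑ f_i(x_i) + ι_C*(y)`. -/
def PhiFun (f : ∀ i : Fin s, (Fin (n i) → ℝ) → EReal) (b : Fin m → ℝ)
    (v : FIdx n m → ℝ) : EReal :=
  objSum f (xpart v) + iotaCstar b (ypart v)

/-- The diagonal matrix `R = diag((β/α_1)I, …, (β/α_s)I, (1/β)I)`. -/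
def Rmat (α : Fin s → ℝ) (β : ℝ) : Matrix (FIdx n m) (FIdx n m) ℝ :=
  Matrix.diagonal (Sum.elim (fun p : XIdx n => β / α p.1) fun _ => 1 / β)

/-- The inverse `R⁻¹` of the diagonal matrix `R`. -/
def Rinv (α : Fin s → ℝ) (β : ℝ) : Matrix (FIdx n m) (FIdx n m) ℝ :=
  Matrix.diagonal (Sum.elim (fun p : XIdx n => α p.1 / β) fun _ => β)

/-- The expansive matrix `E = [[I, −P⁻¹Aᵀ],[βA, I]]`. -/
def Emat (A : ∀ i : Fin s, Matrix (Fin m) (Fin (n i)) ℝ) (α : Fin s → ℝ) (β : ℝ) :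
    Matrix (FIdx n m) (FIdx n m) ℝ :=
  Matrix.fromBlocks 1 (-(Matrix.diagonal (fun p : XIdx n => α p.1 / β) * (bigA A)ᵀ))
    (β • bigA A) 1

/-- The skew-symmetric matrix `S_A = [[0, −Aᵀ],[A, 0]]`. -/
def SAmat (A : ∀ i : Fin s, Matrix (Fin m) (Fin (n i)) ℝ) :
    Matrix (FIdx n m) (FIdx n m) ℝ :=
  Matrix.fromBlocks 0 (-(bigA A)ᵀ) (bigA A) 0

/-- `w = 𝒯(v)`, where `𝒯(x_1,…,x_s,y) = (prox_{(α_1/β)f_1}x_1, …, prox_{(α_s/β)f_s}x_s,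
prox_{β ι_C*}y)`. -/
def isT (f : ∀ i : Fin s, (Fin (n i) → ℝ) → EReal) (b : Fin m → ℝ)
    (α : Fin s → ℝ) (β : ℝ) (v w : FIdx n m → ℝ) : Prop :=
  (∀ i, IsProx (smulF (α i / β) (f i)) 1 (blk (xpart v) i) (blk (xpart w) i)) ∧
  IsProx (smulF β (iotaCstar b)) 1 (ypart v) (ypart w)

/-- `w = T_ℳ(u₁, u₂)`, i.e. `w = 𝒯((E − R⁻¹M₀)w + R⁻¹M₁u₁ + R⁻¹M₂u₂)`. -/
def isTM (f : ∀ i : Fin s, (Fin (n i) → ℝ) → EReal)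
    (A : ∀ i : Fin s, Matrix (Fin m) (Fin (n i)) ℝ) (b : Fin m → ℝ)
    (α : Fin s → ℝ) (β : ℝ) (M0 M1 M2 : Matrix (FIdx n m) (FIdx n m) ℝ)
    (u1 u2 w : FIdx n m → ℝ) : Prop :=
  isT f b α β ((Emat A α β - Rinv α β * M0).mulVec w + (Rinv α β * M1).mulVec u1
    + (Rinv α β * M2).mulVec u2) w

/-- `T_ℳ` is well-defined. -/
def TMWellDefined (f : ∀ i : Fin s, (Fin (n i) → ℝ) → EReal)
    (A : ∀ i : Fin s, Matrix (Fin m) (Fin (n i)) ℝ) (b : Fin m → ℝ)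
    (α : Fin s → ℝ) (β : ℝ) (M0 M1 M2 : Matrix (FIdx n m) (FIdx n m) ℝ) : Prop :=
  ∀ u1 u2 : FIdx n m → ℝ, ∃! w, isTM f A b α β M0 M1 M2 u1 u2 w


/-- The matrix `M₂` (same for the implicit and explicit schemes): `(i,j)` block
`βA_iᵀA_j` for `i < j`, all other blocks zero. -/
def M2mat {s m : ℕ} {n : Fin s → ℕ} (A : ∀ i : Fin s, Matrix (Fin m) (Fin (n i)) ℝ)
    (β : ℝ) : Matrix (FIdx n m) (FIdx n m) ℝ :=
  Matrix.fromBlocks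
    (Matrix.of fun p q : XIdx n =>
      if p.1 < q.1 then β * ∑ r, A p.1 r p.2 * A q.1 r q.2 else 0) 0 0 0

/-- The implicit-scheme matrix `M₀`: diagonal blocks `(β/α_i)I` and `(1/β)I`, `(i,j)` block
`−βA_iᵀA_j` for `i < j`. -/
def M0imp {s m : ℕ} {n : Fin s → ℕ} (A : ∀ i : Fin s, Matrix (Fin m) (Fin (n i)) ℝ)
    (α : Fin s → ℝ) (β : ℝ) : Matrix (FIdx n m) (FIdx n m) ℝ :=
  Matrix.fromBlocks
    (Matrix.of fun p q : XIdx n =>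
      (if p = q then β / α p.1 else 0) +
      (if p.1 < q.1 then -(β * ∑ r, A p.1 r p.2 * A q.1 r q.2) else 0))
    0 0 ((1 / β) • 1)

/-- The implicit-scheme matrix `M₁`: diagonal blocks `(β/α_i)I` and `(1/β)I`, `(i,j)` block
`−2βA_iᵀA_j` for `i < j`. -/
def M1imp {s m : ℕ} {n : Fin s → ℕ} (A : ∀ i : Fin s, Matrix (Fin m) (Fin (n i)) ℝ)
    (α : Fin s → ℝ) (β : ℝ) : Matrix (FIdx n m) (FIdx n m) ℝ :=
  Matrix.fromBlocks
    (Matrix.of fun p q : XIdx n =>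
      (if p = q then β / α p.1 else 0) +
      (if p.1 < q.1 then -(2 * β * ∑ r, A p.1 r p.2 * A q.1 r q.2) else 0))
    0 0 ((1 / β) • 1)

/-! `H = M₀ + M₂` is the diagonal matrix `R = diag((β/α_i) I, (1/β) I)`, so `H^{-1/2}` is
diagonal with entries `√(α_i/β)` on the `x`-blocks. Since `M₂` is supported on the `x`–`x`
block, only those entries act on it, and with `c = maxᵢ α_i`
`‖H^{-1/2} M₂ H^{-1/2}‖ ≤ (c/β) ‖M₂‖ = c ‖M̃₂‖ < 1/2`. -/

section General

open scoped Matrix.Norms.L2Operator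

variable {ι : Type*} [Fintype ι] [DecidableEq ι]

theorem specNorm_eq_l2_opNorm {p q : Type*} [Fintype p] [Fintype q] [DecidableEq q]
    (M : Matrix p q ℝ) : specNorm M = ‖M‖ := rfl

theorem specNorm_smul {p q : Type*} [Fintype p] [Fintype q] [DecidableEq q] (c : ℝ)
    (M : Matrix p q ℝ) : specNorm (c • M) = |c| * specNorm M := by
  rw [specNorm_eq_l2_opNorm, specNorm_eq_l2_opNorm, norm_smul, Real.norm_eq_abs]

theorem Matrix.PosSemidef.sqrt_eq_cfc {A : Matrix ι ι ℝ} (hA : A.PosSemidef) :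
    hA.sqrt = cfc Real.sqrt A := by
  rw [hA.1.cfc_eq]
  simp only [Matrix.PosSemidef.sqrt, Matrix.IsHermitian.cfc, Unitary.conjStarAlgAut_apply]
  rfl

theorem Matrix.PosSemidef.sqrt_eq_of_mul_self_eq {A B : Matrix ι ι ℝ} (hA : A.PosSemidef)
    (hB : B.PosSemidef) (h : B * B = A) : hA.sqrt = B := by
  have hspec : ∀ x ∈ spectrum ℝ B, 0 ≤ x :=
    fun x hx => (posSemidef_iff_isHermitian_and_spectrum_nonneg.1 hB).2 hx
  have hB_sa : IsSelfAdjoint B := hB.1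
  rw [hA.sqrt_eq_cfc, ← h, ← sq, ← cfc_comp_pow Real.sqrt 2 B,
    cfc_congr (f := fun x => √(x ^ 2)) (g := id) fun x hx => Real.sqrt_sq (hspec x hx), cfc_id ℝ B]

theorem Matrix.PosSemidef.sqrt_diagonal {A : Matrix ι ι ℝ} (hA : A.PosSemidef) {d : ι → ℝ}
    (hAd : A = diagonal d) : hA.sqrt = diagonal fun i => √(d i) := by
  subst hAd
  refine hA.sqrt_eq_of_mul_self_eq (posSemidef_diagonal_iff.2 fun i => Real.sqrt_nonneg _) ?_
  rw [diagonal_mul_diagonal]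
  congr 1
  funext i
  simpa using Real.mul_self_sqrt (hA.diag_nonneg (i := i))

theorem Matrix.diagonal_mul_fromBlocks_zero_mul_diagonal {l o R : Type*} [Fintype l]
    [Fintype o] [DecidableEq l] [DecidableEq o] [Semiring R] (d : l ⊕ o → R)
    (K : Matrix l l R) :
    diagonal d * fromBlocks K 0 0 0 * diagonal d =
      diagonal (Sum.elim (d ∘ Sum.inl) 0) * fromBlocks K 0 0 0 *
        diagonal (Sum.elim (d ∘ Sum.inl) 0) := by
  ext (i | i) (j | j) <;> simp [mul_diagonal, diagonal_mul]

theorem specNorm_diagonal_mul_fromBlocks_mul_diagonal_le {l o : Type*} [Fintype l]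
    [Fintype o] [DecidableEq l] [DecidableEq o] (d : l ⊕ o → ℝ) (K : Matrix l l ℝ) {r : ℝ}
    (hr : 0 ≤ r) (hd : ∀ i, |d (Sum.inl i)| ≤ r) :
    specNorm (diagonal d * fromBlocks K 0 0 0 * diagonal d) ≤
      r ^ 2 * specNorm (fromBlocks K 0 0 0 : Matrix (l ⊕ o) (l ⊕ o) ℝ) := by
  set D := diagonal (Sum.elim (d ∘ Sum.inl) 0 : l ⊕ o → ℝ)
  set F : Matrix (l ⊕ o) (l ⊕ o) ℝ := fromBlocks K 0 0 0
  have hD : ‖D‖ ≤ r := by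
    rw [l2_opNorm_diagonal, pi_norm_le_iff_of_nonneg hr]
    rintro (i | i)
    · simpa using hd i
    · simpa using hr
  rw [specNorm_eq_l2_opNorm, specNorm_eq_l2_opNorm, diagonal_mul_fromBlocks_zero_mul_diagonal]
  calc ‖D * F * D‖ ≤ ‖D‖ * ‖F‖ * ‖D‖ :=
        (norm_mul_le _ _).trans (by gcongr; exact norm_mul_le _ _)
    _ ≤ r * ‖F‖ * r := by gcongr
    _ = r ^ 2 * ‖F‖ := by ring

theorem exists_forall_le_and_mul_lt_one {κ : Type*} [Finite κ] {a : κ → ℝ} {K : ℝ}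
    (h : ∀ i, 0 < a i ∧ a i < 1 / K) : ∃ c, 0 ≤ c ∧ (∀ i, a i ≤ c) ∧ c * K < 1 := by
  rcases isEmpty_or_nonempty κ with hκ | hκ
  · exact ⟨0, le_rfl, isEmptyElim, by simp⟩
  · obtain ⟨i₀, hi₀⟩ := Finite.exists_max a
    have hK : 0 < K := one_div_pos.1 ((h i₀).1.trans (h i₀).2)
    exact ⟨a i₀, (h i₀).1.le, hi₀, (lt_div_iff₀ hK).1 (h i₀).2⟩

end General

section ImplicitScheme

variable (A : ∀ i : Fin s, Matrix (Fin m) (Fin (n i)) ℝ) (α : Fin s → ℝ) (β : ℝ)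

theorem M0imp_eq_M1imp_add_M2mat : M0imp A α β = M1imp A α β + M2mat A β := by
  simp only [M0imp, M1imp, M2mat, fromBlocks_add, add_zero]
  congr 1
  ext p q
  simp only [Matrix.add_apply, of_apply]
  split_ifs <;> ring

theorem M0imp_add_M2mat : M0imp A α β + M2mat A β = Rmat α β := by
  rw [Rmat, ← fromBlocks_diagonal, M0imp, M2mat, fromBlocks_add, add_zero, add_zero, add_zero]
  congr 1
  · ext p q
    simp only [Matrix.add_apply, of_apply, diagonal_apply]
    split_ifs <;> simp_all
  · rw [smul_one_eq_diagonal]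

variable {α β}

theorem Rmat_posDef (hα : ∀ i, 0 < α i) (hβ : 0 < β) :
    (Rmat α β : Matrix (FIdx n m) (FIdx n m) ℝ).PosDef := by
  refine posDef_diagonal_iff.2 ?_
  rintro (p | r)
  · exact div_pos hβ (hα p.1)
  · exact one_div_pos.2 hβ

theorem Rmat_inv (hα : ∀ i, α i ≠ 0) (hβ : β ≠ 0) :
    (Rmat α β : Matrix (FIdx n m) (FIdx n m) ℝ)⁻¹ = Rinv α β := by
  refine inv_eq_left_inv ?_
  rw [Rinv, Rmat, diagonal_mul_diagonal, ← diagonal_one]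
  congr 1
  funext i
  rcases i with p | r
  · simp [hα, hβ]
  · simp [hβ]

end ImplicitScheme

/-- if `β > 0` and `0 < α_i < 1/(2‖M̃₂‖₂)` where `M̃₂ = (1/β)M₂`, then the
implicit-scheme matrices `{M₀, M₁, M₂}` satisfy Condition-M. -/
theorem implicit_matrices_conditionM {s m : ℕ} {n : Fin s → ℕ}
    (A : ∀ i : Fin s, Matrix (Fin m) (Fin (n i)) ℝ)
    (α : Fin s → ℝ) (β : ℝ) (hβ : 0 < β)
    (hα : ∀ i, 0 < α i ∧ α i < 1 / (2 * specNorm ((1 / β) • M2mat A β))) :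
    ConditionM (M0imp A α β) (M1imp A α β) (M2mat A β) := by
  obtain ⟨c, hc, hαc, hcN⟩ := exists_forall_le_and_mul_lt_one hα
  have hH : (M0imp A α β + M2mat A β).PosDef :=
    M0imp_add_M2mat A α β ▸ Rmat_posDef (fun i => (hα i).1) hβ
  refine ⟨M0imp_eq_M1imp_add_M2mat A α β, hH, ?_⟩
  rw [hH.inv.posSemidef.sqrt_diagonal (by
    rw [M0imp_add_M2mat, Rmat_inv (fun i => (hα i).1.ne') hβ.ne']; rfl)]
  calc _ ≤ √(c / β) ^ 2 * specNorm (M2mat A β) :=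
        specNorm_diagonal_mul_fromBlocks_mul_diagonal_le _ _ (Real.sqrt_nonneg _) fun p => by
          rw [abs_of_nonneg (Real.sqrt_nonneg _)]
          exact Real.sqrt_le_sqrt (div_le_div_of_nonneg_right (hαc p.1) hβ.le)
    _ = c * specNorm ((1 / β) • M2mat A β) := by
        rw [Real.sq_sqrt (by positivity), specNorm_smul, abs_of_pos (one_div_pos.2 hβ)]
        field_simp
    _ < 1 / 2 := by linarith
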